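/- arXiv:2401.02153 — 3 statements merged into one kernel-verified Lean document; each statement's English description precedes it below -/
import Mathlib

section
/- The answer sets of a ground disjunctive logic program P form an antichain with respect to set inclusion: if I and J are both answer sets of P and I ⊆ J, then I = J. -/
/-- A ground disjunctive rule: head, positive body, negative body (finite sets of atoms). -/
structure Rule (α : Type*) where
  head : Finset α
  pos : Finset α
  neg : Finset α

variable {α : Type*}

/-- An interpretation `I` satisfies a rule `r`. -/
def ruleSat (I : Set α) (r : Rule α) : Prop :=
  ((↑r.pos : Set α) ⊆ I ∧ ∀ a ∈ r.neg, a ∉ I) → ∃ a ∈ r.head, a ∈ I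

/-- `I` is a model of the program `P`. -/
def isModel (I : Set α) (P : Set (Rule α)) : Prop :=
  ∀ r ∈ P, ruleSat I r

/-- The Gelfond–Lifschitz reduct `P^I`. -/
def reduct (P : Set (Rule α)) (I : Set α) : Set (Rule α) :=
  {r' | ∃ r ∈ P, (∀ a ∈ r.neg, a ∉ I) ∧ r' = ⟨r.head, r.pos, ∅⟩}

/-- `I` is an answer set of `P`: a minimal model of the reduct `P^I`. -/
def isAnswerSet (I : Set α) (P : Set (Rule α)) : Prop :=
  isModel I (reduct P I) ∧ ∀ J ⊆ I, isModel J (reduct P I) → J = I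

theorem answer_sets_antichain (P : Set (Rule α)) (I J : Set α)
    (hI : isAnswerSet I P) (hJ : isAnswerSet J P) (hsub : I ⊆ J) : I = J := by
  apply hJ.2 I hsub
  intro r' hr'
  obtain ⟨r, hrP, hneg, rfl⟩ := hr'
  exact hI.1 _ ⟨r, hrP, fun a ha haI => hneg a ha (hsub haI), rfl⟩
end

section
/- Let P be a ground disjunctive program, C a finite set of ground constraints, and let fail be a fresh atom not occurring in P or C. Define C' = { fail ← B(c) : c ∈ C } ∪ { ← not fail }. Then every answer set of P satisfies all constraints in C (equivalently AS(P) = AS(P ∪ C)) if and only if P ∪ C' has no answer set. -/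
variable {α : Type*}

lemma reduct_congr {P : Set (Rule α)} {I J : Set α}
    (h : ∀ r ∈ P, ∀ a ∈ r.neg, (a ∈ I ↔ a ∈ J)) : reduct P I = reduct P J := by
  ext r'
  constructor
  · rintro ⟨r, hr, hn, rfl⟩
    exact ⟨r, hr, fun a ha => ((h r hr a ha).not).mp (hn a ha), rfl⟩
  · rintro ⟨r, hr, hn, rfl⟩
    exact ⟨r, hr, fun a ha => ((h r hr a ha).not).mpr (hn a ha), rfl⟩

theorem constraintForAll_rewriting (P C : Set (Rule α)) (hCfin : C.Finite)
    (hChead : ∀ c ∈ C, c.head = ∅) (fail : α)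
    (hfreshP : ∀ r ∈ P, fail ∉ r.head ∧ fail ∉ r.pos ∧ fail ∉ r.neg)
    (hfreshC : ∀ c ∈ C, fail ∉ c.pos ∧ fail ∉ c.neg) :
    (∀ M : Set α, isAnswerSet M P → ∀ c ∈ C, ruleSat M c) ↔
      (∀ M : Set α,
        ¬ isAnswerSet M (P ∪ ((fun c : Rule α => (⟨{fail}, c.pos, c.neg⟩ : Rule α)) '' C)
          ∪ {(⟨∅, ∅, {fail}⟩ : Rule α)})) := by
  set Q : Set (Rule α) := (fun c : Rule α => (⟨{fail}, c.pos, c.neg⟩ : Rule α)) '' C with hQ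
  set F : Rule α := ⟨∅, ∅, {fail}⟩ with hF
  set P' : Set (Rule α) := P ∪ Q ∪ {F} with hP'
  have memP' : ∀ {r : Rule α}, r ∈ P' ↔ r ∈ P ∨ r ∈ Q ∨ r = F := by
    intro r; simp [hP', Set.mem_union, or_assoc]; tauto
  constructor
  · -- forward
    intro h M hMas
    by_cases hfM : fail ∈ M
    · -- M' := M \ {fail}
      set M' : Set α := M \ {fail} with hM'
      have hM'sub : M' ⊆ M := Set.diff_subset
      have hfM' : fail ∉ M' := fun h' => h'.2 rfl
      have hbP : ∀ r' ∈ reduct P M, ruleSat M' r' := by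
        rintro r' ⟨r, hr, hn, rfl⟩
        intro ⟨hpos, _⟩
        have hpos' : (↑r.pos : Set α) ⊆ M := hpos.trans hM'sub
        obtain ⟨a, haH, haM⟩ :=
          hMas.1 _ ⟨r, memP'.mpr (Or.inl hr), hn, rfl⟩ ⟨hpos', by simp⟩
        refine ⟨a, haH, haM, fun hae => ?_⟩
        exact (hfreshP r hr).1 (by rw [← hae] at *; exact haH)
      have hc : ¬ isModel M' (reduct P' M) := by
        intro hmod
        have := hMas.2 M' hM'sub hmod
        exact hfM' (this ▸ hfM)
      have hviol : ∃ c ∈ C, (↑c.pos : Set α) ⊆ M' ∧ (∀ a ∈ c.neg, a ∉ M) := by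
        by_contra hno
        push_neg at hno
        apply hc
        rintro r' ⟨r, hr, hn, rfl⟩
        rcases memP'.mp hr with hrP | hrQ | hrF
        · exact hbP _ ⟨r, hrP, hn, rfl⟩
        · rintro ⟨hpos, _⟩
          obtain ⟨c, hcC, rfl⟩ := hrQ
          obtain ⟨a, ha, haM⟩ := hno c hcC hpos
          exact absurd haM (hn a ha)
        · exfalso
          subst hrF
          exact hn fail (by simp [hF]) hfM
      obtain ⟨c, hcC, hcpos, hcneg⟩ := hviol
      have hredP : reduct P M = reduct P M' := by
        apply reduct_congr
        intro r hr a ha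
        have hane : a ≠ fail := fun h' => (hfreshP r hr).2.2 (h' ▸ ha)
        simp [hM', hane]
      have hasM' : isAnswerSet M' P := by
        constructor
        · rw [← hredP]; exact hbP
        · intro J hJ hJmod
          set J' : Set α := J ∪ {fail} with hJ'def
          have hJ'M : J' ⊆ M := by
            intro a ha
            rcases ha with ha | ha
            · exact hM'sub (hJ ha)
            · rcases ha with rfl; exact hfM
          have hfJ : fail ∉ J := fun h' => hfM' (hJ h')
          have hJ'mod : isModel J' (reduct P' M) := by
            rintro r' ⟨r, hr, hn, rfl⟩
            rcases memP'.mp hr with hrP | hrQ | hrF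
            · intro ⟨hpos, _⟩
              have hposJ : (↑r.pos : Set α) ⊆ J := by
                intro a ha
                rcases hpos ha with h' | h'
                · exact h'
                · rcases h' with rfl
                  exact absurd ha (by simpa using (hfreshP r hrP).2.1)
              have hmem : (⟨r.head, r.pos, ∅⟩ : Rule α) ∈ reduct P M' := by
                rw [← hredP]; exact ⟨r, hrP, hn, rfl⟩
              obtain ⟨a, haH, haJ⟩ := hJmod _ hmem ⟨hposJ, by simp⟩
              exact ⟨a, haH, Or.inl haJ⟩
            · intro _
              obtain ⟨cq, hcq, rfl⟩ := hrQ
              exact ⟨fail, by simp, Or.inr rfl⟩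
            · exfalso
              subst hrF
              exact hn fail (by simp [hF]) hfM
          have hJ'eq : J' = M := hMas.2 J' hJ'M hJ'mod
          ext a
          constructor
          · intro haJ
            exact ⟨hJ'eq ▸ Or.inl haJ, fun h' => hfJ (h' ▸ haJ)⟩
          · intro ⟨haM, hane⟩
            have : a ∈ J' := hJ'eq ▸ haM
            rcases this with h' | h'
            · exact h'
            · exact absurd h' hane
      have := h M' hasM' c hcC ⟨hcpos, fun a ha haM' => hcneg a ha (hM'sub haM')⟩
      obtain ⟨a, haH, _⟩ := this
      rw [hChead c hcC] at haH
      exact absurd haH (Finset.notMem_empty a)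
    · -- fail ∉ M : violated ← not fail
      have hmem : (⟨(∅ : Finset α), (∅ : Finset α), (∅ : Finset α)⟩ : Rule α) ∈ reduct P' M := by
        refine ⟨F, memP'.mpr (Or.inr (Or.inr rfl)), ?_, rfl⟩
        simp [hF, hfM]
      obtain ⟨a, ha, _⟩ := hMas.1 _ hmem ⟨by simp, by simp⟩
      exact absurd ha (Finset.notMem_empty a)
  · -- backward
    intro h M hMas c hcC
    by_contra hviol
    unfold ruleSat at hviol
    push_neg at hviol
    obtain ⟨⟨hcpos, hcneg⟩, hchead⟩ := hviol
    -- fail ∉ M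
    have hfM : fail ∉ M := by
      intro hfM
      have hmod : isModel (M \ {fail}) (reduct P M) := by
        rintro r' ⟨r, hr, hn, rfl⟩
        intro ⟨hpos, _⟩
        have hpos' : (↑r.pos : Set α) ⊆ M := hpos.trans Set.diff_subset
        obtain ⟨a, haH, haM⟩ := hMas.1 _ ⟨r, hr, hn, rfl⟩ ⟨hpos', by simp⟩
        refine ⟨a, haH, haM, fun hae => (hfreshP r hr).1 (hae ▸ haH)⟩
      have heq := hMas.2 (M \ {fail}) Set.diff_subset hmod
      rw [← heq] at hfM
      exact hfM.2 rfl
    set Ms : Set α := M ∪ {fail} with hMs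
    have hfMs : fail ∈ Ms := Or.inr rfl
    have hredP : reduct P Ms = reduct P M := by
      apply reduct_congr
      intro r hr a ha
      have hane : a ≠ fail := fun h' => (hfreshP r hr).2.2 (h' ▸ ha)
      simp [hMs, hane]
    have hposM : ∀ r ∈ P, (↑r.pos : Set α) ⊆ Ms → (↑r.pos : Set α) ⊆ M := by
      intro r hr hpos a ha
      rcases hpos ha with h' | h'
      · exact h'
      · rcases h' with rfl; exact absurd ha (by simpa using (hfreshP r hr).2.1)
    apply h Ms
    constructor
    · rintro r' ⟨r, hr, hn, rfl⟩
      rcases memP'.mp hr with hrP | hrQ | hrF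
      · intro ⟨hpos, _⟩
        have hnM : ∀ a ∈ r.neg, a ∉ M := fun a ha haM => hn a ha (Or.inl haM)
        obtain ⟨a, haH, haM⟩ := hMas.1 _ ⟨r, hrP, hnM, rfl⟩ ⟨hposM r hrP hpos, by simp⟩
        exact ⟨a, haH, Or.inl haM⟩
      · intro _
        obtain ⟨cq, hcq, rfl⟩ := hrQ
        exact ⟨fail, by simp, hfMs⟩
      · exfalso
        subst hrF
        exact hn fail (by simp [hF]) hfMs
    · intro J hJ hJmod
      set J0 : Set α := J \ {fail} with hJ0
      have hJ0M : J0 ⊆ M := by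
        intro a ⟨haJ, hane⟩
        rcases hJ haJ with h' | h'
        · exact h'
        · exact absurd h' hane
      have hJ0mod : isModel J0 (reduct P M) := by
        rintro r' ⟨r, hr, hn, rfl⟩
        intro ⟨hpos, _⟩
        have hnMs : ∀ a ∈ r.neg, a ∉ Ms := by
          intro a ha haMs
          rcases haMs with h' | h'
          · exact hn a ha h'
          · rcases h' with rfl; exact (hfreshP r hr).2.2 ha
        have hmem : (⟨r.head, r.pos, ∅⟩ : Rule α) ∈ reduct P' Ms :=
          ⟨r, memP'.mpr (Or.inl hr), hnMs, rfl⟩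
        obtain ⟨a, haH, haJ⟩ := hJmod _ hmem ⟨hpos.trans Set.diff_subset, by simp⟩
        exact ⟨a, haH, haJ, fun hae => (hfreshP r hr).1 (hae ▸ haH)⟩
      have hJ0eq : J0 = M := hMas.2 J0 hJ0M hJ0mod
      -- fail ∈ J via the rule for c
      have hfailJ : fail ∈ J := by
        have hnc : ∀ a ∈ (⟨{fail}, c.pos, c.neg⟩ : Rule α).neg, a ∉ Ms := by
          intro a ha haMs
          rcases haMs with h' | h'
          · exact hcneg a ha h'
          · rcases h' with rfl; exact (hfreshC c hcC).2 ha
        have hmem : (⟨({fail} : Finset α), c.pos, ∅⟩ : Rule α) ∈ reduct P' Ms :=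
          ⟨⟨{fail}, c.pos, c.neg⟩, memP'.mpr (Or.inr (Or.inl ⟨c, hcC, rfl⟩)), hnc, rfl⟩
        have hposJ : (↑c.pos : Set α) ⊆ J := by
          intro a ha
          have : a ∈ J0 := hJ0eq ▸ hcpos ha
          exact this.1
        obtain ⟨a, haH, haJ⟩ := hJmod _ hmem ⟨hposJ, by simp⟩
        simp at haH
        exact haH ▸ haJ
      ext a
      constructor
      · exact fun haJ => hJ haJ
      · intro haMs
        rcases haMs with h' | h'
        · have : a ∈ J0 := hJ0eq ▸ h'
          exact this.1
        · exact h' ▸ hfailJ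
end

section
/- Fresh-atom conservativity: let P be a ground disjunctive program and r the rule f ← b₁,…,b_m, not c₁,…,not c_n where the atom f occurs nowhere in P and not among the bᵢ, cⱼ. Then the map M ↦ M \ {f} is a bijection from AS(P ∪ {r}) onto AS(P); in particular, for each answer set N of P there is exactly one answer set M of P ∪ {r} with M \ {f} = N, and f ∈ M iff N satisfies the body of r. -/
variable {α : Type*}

lemma model_sdiff {f : α} {S : Set (Rule α)}
    (h : ∀ r ∈ S, f ∉ r.head ∧ f ∉ r.pos ∧ f ∉ r.neg) {J : Set α} :
    isModel (J \ {f}) S ↔ isModel J S := by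
  constructor <;> intro hm r hr
  · rintro ⟨hp, hn⟩
    obtain ⟨a, ha, haJ⟩ := hm r hr ⟨fun x hx => ⟨hp hx, by
      simp only [Set.mem_singleton_iff]
      rintro rfl
      exact (h r hr).2.1 (by exact_mod_cast hx)⟩, fun a ha haJ => hn a ha haJ.1⟩
    exact ⟨a, ha, haJ.1⟩
  · rintro ⟨hp, hn⟩
    obtain ⟨a, ha, haJ⟩ := hm r hr ⟨fun x hx => (hp hx).1, fun a ha haJ => hn a ha ⟨haJ, by
      simp only [Set.mem_singleton_iff]
      rintro rfl
      exact (h r hr).2.2 ha⟩⟩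
    refine ⟨a, ha, haJ, ?_⟩
    simp only [Set.mem_singleton_iff]
    rintro rfl
    exact (h r hr).1 ha

lemma reduct_sdiff {f : α} {P : Set (Rule α)}
    (h : ∀ r ∈ P, f ∉ r.neg) (I : Set α) :
    reduct P (I \ {f}) = reduct P I := by
  ext r'
  simp only [reduct, Set.mem_setOf_eq]
  constructor <;> rintro ⟨r, hr, hneg, rfl⟩
  · refine ⟨r, hr, fun a ha haI => hneg a ha ⟨haI, ?_⟩, rfl⟩
    simp only [Set.mem_singleton_iff]
    rintro rfl
    exact h r hr ha
  · exact ⟨r, hr, fun a ha haI => hneg a ha haI.1, rfl⟩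

lemma reduct_fresh {f : α} {P : Set (Rule α)} {I : Set α}
    (h : ∀ r ∈ P, f ∉ r.head ∧ f ∉ r.pos ∧ f ∉ r.neg) :
    ∀ r' ∈ reduct P I, f ∉ r'.head ∧ f ∉ r'.pos ∧ f ∉ r'.neg := by
  rintro r' ⟨r, hr, -, rfl⟩
  exact ⟨(h r hr).1, (h r hr).2.1, by simp⟩

lemma model_reduct_union {f : α} {P : Set (Rule α)} {B C : Finset α} {I J : Set α} :
    isModel J (reduct (P ∪ {(⟨{f}, B, C⟩ : Rule α)}) I) ↔
      isModel J (reduct P I) ∧ ((∀ a ∈ C, a ∉ I) → (↑B : Set α) ⊆ J → f ∈ J) := by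
  constructor
  · intro hm
    refine ⟨fun r' hr' => hm r' ?_, fun hC hB => ?_⟩
    · obtain ⟨r, hr, hneg, rfl⟩ := hr'
      exact ⟨r, Or.inl hr, hneg, rfl⟩
    · have := hm ⟨{f}, B, ∅⟩ ⟨⟨{f}, B, C⟩, Or.inr rfl, hC, rfl⟩ ⟨hB, by simp⟩
      simpa using this
  · rintro ⟨h1, h2⟩ r' ⟨r, hr | hr, hneg, rfl⟩
    · exact h1 _ ⟨r, hr, hneg, rfl⟩
    · rw [Set.mem_singleton_iff] at hr
      subst hr
      rintro ⟨hB, -⟩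
      exact ⟨f, Finset.mem_singleton_self f, h2 hneg hB⟩

lemma fresh_not_mem {f : α} {P : Set (Rule α)}
    (hfreshP : ∀ r ∈ P, f ∉ r.head ∧ f ∉ r.pos ∧ f ∉ r.neg) {N : Set α}
    (hN : isAnswerSet N P) : f ∉ N := by
  intro hf
  have h1 : isModel (N \ {f}) (reduct P N) :=
    (model_sdiff (reduct_fresh hfreshP)).2 hN.1
  have h2 := hN.2 (N \ {f}) Set.diff_subset h1
  rw [← h2] at hf
  exact hf.2 rfl

lemma forward {f : α} {P : Set (Rule α)} {B C : Finset α}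
    (hfreshP : ∀ r ∈ P, f ∉ r.head ∧ f ∉ r.pos ∧ f ∉ r.neg)
    (hfB : f ∉ B) (hfC : f ∉ C) {M : Set α}
    (hM : isAnswerSet M (P ∪ {(⟨{f}, B, C⟩ : Rule α)})) :
    isAnswerSet (M \ {f}) P ∧
      (f ∈ M ↔ ((↑B : Set α) ⊆ M \ {f} ∧ ∀ a ∈ C, a ∉ M \ {f})) := by
  obtain ⟨hmod, hmin⟩ := hM
  rw [model_reduct_union] at hmod
  obtain ⟨hmodP, hfr⟩ := hmod
  have hBeq : (↑B : Set α) ⊆ M ↔ (↑B : Set α) ⊆ M \ {f} := by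
    constructor
    · intro h x hx
      refine ⟨h hx, ?_⟩
      simp only [Set.mem_singleton_iff]
      rintro rfl
      exact hfB (by exact_mod_cast hx)
    · intro h x hx; exact (h hx).1
  have hCeq : (∀ a ∈ C, a ∉ M) ↔ (∀ a ∈ C, a ∉ M \ {f}) := by
    constructor
    · intro h a ha haM; exact h a ha haM.1
    · intro h a ha haM
      refine h a ha ⟨haM, ?_⟩
      simp only [Set.mem_singleton_iff]
      rintro rfl
      exact hfC ha
  have hred : reduct P (M \ {f}) = reduct P M :=
    reduct_sdiff (fun r hr => (hfreshP r hr).2.2) M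
  have hNmod : isModel (M \ {f}) (reduct P M) :=
    (model_sdiff (reduct_fresh hfreshP)).2 hmodP
  by_cases hfM : f ∈ M
  · have hbody : (↑B : Set α) ⊆ M ∧ ∀ a ∈ C, a ∉ M := by
      by_contra hcon
      have hm2 : isModel (M \ {f}) (reduct (P ∪ {(⟨{f}, B, C⟩ : Rule α)}) M) := by
        rw [model_reduct_union]
        exact ⟨hNmod, fun hC hB => absurd ⟨hBeq.2 hB, hC⟩ hcon⟩
      have heq := hmin (M \ {f}) Set.diff_subset hm2
      rw [← heq] at hfM
      exact hfM.2 rfl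
    refine ⟨⟨hred ▸ hNmod, ?_⟩, ?_⟩
    · intro J hJ hJmod
      rw [hred] at hJmod
      have hfJ : f ∉ J := fun hf => (hJ hf).2 rfl
      have hdJ : (J ∪ {f}) \ {f} = J := by
        rw [Set.union_diff_distrib]
        simp [Set.diff_singleton_eq_self hfJ]
      have hJ'mod : isModel (J ∪ {f}) (reduct (P ∪ {(⟨{f}, B, C⟩ : Rule α)}) M) := by
        rw [model_reduct_union]
        refine ⟨(model_sdiff (reduct_fresh hfreshP)).1 ?_, fun _ _ => Or.inr rfl⟩
        rw [hdJ]; exact hJmod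
      have hJ'sub : J ∪ {f} ⊆ M :=
        Set.union_subset (hJ.trans Set.diff_subset) (Set.singleton_subset_iff.2 hfM)
      have heq := hmin (J ∪ {f}) hJ'sub hJ'mod
      rw [← heq, hdJ]
    · exact ⟨fun _ => ⟨hBeq.1 hbody.1, hCeq.1 hbody.2⟩, fun _ => hfM⟩
  · have hNM : M \ {f} = M := Set.diff_singleton_eq_self hfM
    refine ⟨⟨hred ▸ hNmod, ?_⟩, ?_⟩
    · intro J hJ hJmod
      rw [hred] at hJmod
      have hJmod' : isModel J (reduct (P ∪ {(⟨{f}, B, C⟩ : Rule α)}) M) := by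
        rw [model_reduct_union]
        refine ⟨hJmod, fun hC hB => ?_⟩
        exact absurd (hfr hC ((hB.trans hJ).trans Set.diff_subset)) hfM
      rw [hmin J (hJ.trans Set.diff_subset) hJmod', hNM]
    · constructor
      · intro h; exact absurd h hfM
      · rintro ⟨hB, hC⟩
        exact absurd (hfr (hCeq.2 hC) (hBeq.2 hB)) hfM

lemma backward_pos {f : α} {P : Set (Rule α)} {B C : Finset α}
    (hfreshP : ∀ r ∈ P, f ∉ r.head ∧ f ∉ r.pos ∧ f ∉ r.neg)
    (hfB : f ∉ B) (hfC : f ∉ C) {N : Set α} (hN : isAnswerSet N P)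
    (hB : (↑B : Set α) ⊆ N) (hC : ∀ a ∈ C, a ∉ N) :
    isAnswerSet (N ∪ {f}) (P ∪ {(⟨{f}, B, C⟩ : Rule α)}) := by
  have hfN : f ∉ N := fresh_not_mem hfreshP hN
  have hdiff : (N ∪ {f}) \ {f} = N := by
    rw [Set.union_diff_distrib]
    simp [Set.diff_singleton_eq_self hfN]
  have hred : reduct P (N ∪ {f}) = reduct P N := by
    rw [← reduct_sdiff (fun r hr => (hfreshP r hr).2.2) (N ∪ {f}), hdiff]
  constructor
  · rw [model_reduct_union, hred]
    refine ⟨(model_sdiff (reduct_fresh hfreshP)).1 ?_, fun _ _ => Or.inr rfl⟩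
    rw [hdiff]; exact hN.1
  · intro J hJ hJmod
    rw [model_reduct_union, hred] at hJmod
    have hJN : J \ {f} ⊆ N := by
      rw [← hdiff]; exact Set.diff_subset_diff_left hJ
    have h1 : isModel (J \ {f}) (reduct P N) :=
      (model_sdiff (reduct_fresh hfreshP)).2 hJmod.1
    have h2 := hN.2 (J \ {f}) hJN h1
    have hNJ : N ⊆ J := by rw [← h2]; exact Set.diff_subset
    have hCM : ∀ a ∈ C, a ∉ N ∪ {f} := by
      rintro a ha (h | h)
      · exact hC a ha h
      · rw [Set.mem_singleton_iff] at h; subst h; exact hfC ha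
    have hfJ : f ∈ J := hJmod.2 hCM (hB.trans hNJ)
    refine Set.Subset.antisymm hJ (Set.union_subset hNJ (Set.singleton_subset_iff.2 hfJ))

lemma backward_neg {f : α} {P : Set (Rule α)} {B C : Finset α} {N : Set α}
    (hN : isAnswerSet N P)
    (hbody : ¬((↑B : Set α) ⊆ N ∧ ∀ a ∈ C, a ∉ N)) :
    isAnswerSet N (P ∪ {(⟨{f}, B, C⟩ : Rule α)}) := by
  constructor
  · rw [model_reduct_union]
    exact ⟨hN.1, fun hC hB => absurd ⟨hB, hC⟩ hbody⟩
  · intro J hJ hJmod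
    rw [model_reduct_union] at hJmod
    exact hN.2 J hJ hJmod.1

theorem fresh_atom_conservativity (P : Set (Rule α)) (f : α) (B C : Finset α)
    (hfreshP : ∀ r ∈ P, f ∉ r.head ∧ f ∉ r.pos ∧ f ∉ r.neg)
    (hfB : f ∉ B) (hfC : f ∉ C) :
    Set.BijOn (fun M : Set α => M \ {f})
        {M : Set α | isAnswerSet M (P ∪ {(⟨{f}, B, C⟩ : Rule α)})}
        {N : Set α | isAnswerSet N P} ∧
      ∀ N : Set α, isAnswerSet N P →
        (∃! M : Set α, isAnswerSet M (P ∪ {(⟨{f}, B, C⟩ : Rule α)}) ∧ M \ {f} = N) ∧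
        ∀ M : Set α, isAnswerSet M (P ∪ {(⟨{f}, B, C⟩ : Rule α)}) → M \ {f} = N →
          (f ∈ M ↔ ((↑B : Set α) ⊆ N ∧ ∀ a ∈ C, a ∉ N)) := by
  have hinj : ∀ M1 M2, isAnswerSet M1 (P ∪ {(⟨{f}, B, C⟩ : Rule α)}) →
      isAnswerSet M2 (P ∪ {(⟨{f}, B, C⟩ : Rule α)}) → M1 \ {f} = M2 \ {f} → M1 = M2 := by
    intro M1 M2 h1 h2 he
    have hf12 : f ∈ M1 ↔ f ∈ M2 := by
      rw [(forward hfreshP hfB hfC h1).2, (forward hfreshP hfB hfC h2).2, he]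
    ext x
    by_cases hx : x = f
    · subst hx; exact hf12
    · constructor <;> intro hxm
      · have hm : x ∈ M1 \ {f} := ⟨hxm, hx⟩
        rw [he] at hm; exact hm.1
      · have hm : x ∈ M2 \ {f} := ⟨hxm, hx⟩
        rw [← he] at hm; exact hm.1
  have hexists : ∀ N, isAnswerSet N P →
      ∃ M, isAnswerSet M (P ∪ {(⟨{f}, B, C⟩ : Rule α)}) ∧ M \ {f} = N := by
    intro N hN
    by_cases hbody : (↑B : Set α) ⊆ N ∧ ∀ a ∈ C, a ∉ N
    · refine ⟨N ∪ {f}, backward_pos hfreshP hfB hfC hN hbody.1 hbody.2, ?_⟩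
      rw [Set.union_diff_distrib]
      simp [Set.diff_singleton_eq_self (fresh_not_mem hfreshP hN)]
    · exact ⟨N, backward_neg hN hbody,
        Set.diff_singleton_eq_self (fresh_not_mem hfreshP hN)⟩
  refine ⟨⟨fun M hM => (forward hfreshP hfB hfC hM).1,
      fun M1 h1 M2 h2 he => hinj M1 M2 h1 h2 he,
      fun N hN => ?_⟩, fun N hN => ⟨?_, ?_⟩⟩
  · obtain ⟨M, hMQ, hMN⟩ := hexists N hN
    exact ⟨M, hMQ, hMN⟩
  · obtain ⟨M, hMQ, hMN⟩ := hexists N hN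
    exact ⟨M, ⟨hMQ, hMN⟩, fun M' hM' => hinj M' M hM'.1 hMQ (by rw [hMN, hM'.2])⟩
  · intro M hMQ hMN
    have h := (forward hfreshP hfB hfC hMQ).2
    rw [hMN] at h
    exact h
end
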